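/- Any family of classical channels {C_λ} from 𝒳 to 𝒴 (with |𝒴| = d) can be masked by the quantum isometry M|j⟩ = (1/√d)Σ_k w^{kj}|kk⟩: for all λ and all input states ρ, Tr_A[M C_λ(ρ) M†] = Tr_B[M C_λ(ρ) M†] = Tr(ρ)·1/d. -/

import Mathlib

/-!
Every classical channel outputs a diagonal matrix `diagonal c` with `∑ c = Tr ρ`. The masker maps
`|j⟩` into the span of the `|kk⟩`, with all amplitudes of modulus `1/√d`. Hence
`M (diagonal c) M†` lives on the `|kk⟩` block, so each partial trace keeps only its diagonal
`k = k'`, where the entry is `∑ⱼ cⱼ |M_{kk,j}|² = Tr ρ / d` whatever `c` is.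
-/

open Matrix
open scoped ComplexOrder

noncomputable section

/-- Partial trace over the first (A) factor. -/
def ptA {dA dB : ℕ} (M : Matrix (Fin dA × Fin dB) (Fin dA × Fin dB) ℂ) :
    Matrix (Fin dB) (Fin dB) ℂ :=
  fun i j => ∑ k, M (k, i) (k, j)

/-- Partial trace over the second (B) factor. -/
def ptB {dA dB : ℕ} (M : Matrix (Fin dA × Fin dB) (Fin dA × Fin dB) ℂ) :
    Matrix (Fin dA) (Fin dA) ℂ :=
  fun i j => ∑ k, M (i, k) (j, k)

/-- The Fourier masker `M|j⟩ = (1/√d) ∑_k w^{kj} |kk⟩`, with `w = e^{2πi/d}`. -/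
def fourierMasker (d : ℕ) : Matrix (Fin d × Fin d) (Fin d) ℂ := fun p j =>
  if p.1 = p.2 then
    (1 / (Real.sqrt d : ℂ)) *
      Complex.exp (2 * Real.pi * Complex.I / d) ^ ((p.1.val + 1) * (j.val + 1))
  else 0

/-- The classical channel `ρ ↦ ∑_{x,y} p(y|x) ⟨x|ρ|x⟩ |y⟩⟨y|`. -/
def classicalChannel {𝒳 : Type*} [Fintype 𝒳] [DecidableEq 𝒳] {d : ℕ}
    (p : 𝒳 → Fin d → ℝ) (ρ : Matrix 𝒳 𝒳 ℂ) : Matrix (Fin d) (Fin d) ℂ :=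
  fun y y' => if y = y' then ∑ x, ((p x y : ℝ) : ℂ) * ρ x x else 0

theorem classicalChannel_eq_diagonal {𝒳 : Type*} [Fintype 𝒳] [DecidableEq 𝒳] {d : ℕ}
    (p : 𝒳 → Fin d → ℝ) (ρ : Matrix 𝒳 𝒳 ℂ) :
    classicalChannel p ρ = diagonal fun y => ∑ x, ((p x y : ℝ) : ℂ) * ρ x x := by
  ext y y'
  simp only [classicalChannel, diagonal_apply]

theorem trace_classicalChannel {𝒳 : Type*} [Fintype 𝒳] [DecidableEq 𝒳] {d : ℕ}
    {p : 𝒳 → Fin d → ℝ} (hp : ∀ x, ∑ y, p x y = 1) (ρ : Matrix 𝒳 𝒳 ℂ) :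
    (classicalChannel p ρ).trace = ρ.trace := by
  rw [classicalChannel_eq_diagonal, trace_diagonal, Finset.sum_comm]
  simp only [← Finset.sum_mul, ← Complex.ofReal_sum, hp, Complex.ofReal_one, one_mul]
  rfl

section DiagonalSupport

variable {n : ℕ} {ι : Type*} [Fintype ι] [DecidableEq ι] {V : Matrix (Fin n × Fin n) ι ℂ}
  {r : ℂ}

theorem mul_diagonal_mul_conjTranspose_apply (c : ι → ℂ) (p q : Fin n × Fin n) :
    (V * diagonal c * Vᴴ) p q = ∑ j, V p j * c j * star (V q j) := by
  simp only [mul_apply (M := V * diagonal c), mul_diagonal, conjTranspose_apply]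

variable (hV : ∀ a b j, a ≠ b → V (a, b) j = 0)
  (hr : ∀ a j, V (a, a) j * star (V (a, a) j) = r)
include hV hr

theorem ptA_mul_diagonal_mul_conjTranspose (c : ι → ℂ) :
    ptA (V * diagonal c * Vᴴ) = (r * ∑ j, c j) • (1 : Matrix (Fin n) (Fin n) ℂ) := by
  ext b b'
  rw [ptA, Finset.sum_eq_single b fun k _ hk => by
    simp [mul_diagonal_mul_conjTranspose_apply, hV k b _ hk]]
  · rw [mul_diagonal_mul_conjTranspose_apply, Matrix.smul_apply, one_apply, smul_eq_mul]
    by_cases hbb : b = b'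
    · subst hbb
      simp only [if_true, mul_one, Finset.mul_sum]
      exact Finset.sum_congr rfl fun j _ => by rw [← hr b j]; ring
    · simp [hbb, hV b b' _ hbb]
  · simp

theorem ptB_mul_diagonal_mul_conjTranspose (c : ι → ℂ) :
    ptB (V * diagonal c * Vᴴ) = (r * ∑ j, c j) • (1 : Matrix (Fin n) (Fin n) ℂ) := by
  ext b b'
  rw [ptB, Finset.sum_eq_single b fun k _ hk => by
    simp [mul_diagonal_mul_conjTranspose_apply, hV b k _ hk.symm]]
  · rw [mul_diagonal_mul_conjTranspose_apply, Matrix.smul_apply, one_apply, smul_eq_mul]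
    by_cases hbb : b = b'
    · subst hbb
      simp only [if_true, mul_one, Finset.mul_sum]
      exact Finset.sum_congr rfl fun j _ => by rw [← hr b j]; ring
    · simp [hbb, hV b' b _ (Ne.symm hbb)]
  · simp

end DiagonalSupport

theorem fourierMasker_apply_of_ne {d : ℕ} {a b : Fin d} (j : Fin d) (h : a ≠ b) :
    fourierMasker d (a, b) j = 0 :=
  if_neg h

theorem fourierMasker_mul_star_self (d : ℕ) (a j : Fin d) :
    fourierMasker d (a, a) j * star (fourierMasker d (a, a) j) = 1 / d := by
  have hw : ‖Complex.exp (2 * Real.pi * Complex.I / d)‖ = 1 := by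
    rw [Complex.norm_exp]
    simp
  rw [fourierMasker, if_pos rfl, Complex.star_def, Complex.mul_conj', norm_mul, norm_pow, hw,
    one_pow, mul_one, norm_div, norm_one, Complex.norm_real,
    Real.norm_of_nonneg (Real.sqrt_nonneg _), ← Complex.ofReal_pow, div_pow,
    Real.sq_sqrt (Nat.cast_nonneg d)]
  push_cast
  ring

theorem stmt18_general {𝒳 Λ : Type*} [Fintype 𝒳] [DecidableEq 𝒳] (d : ℕ)
    (p : Λ → 𝒳 → Fin d → ℝ)
    (hprob : ∀ l x, (∀ y, 0 ≤ p l x y) ∧ ∑ y, p l x y = 1) :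
    ∀ (l : Λ) (ρ : Matrix 𝒳 𝒳 ℂ), ρ.PosSemidef → ρ.trace = 1 →
      ptA (fourierMasker d * classicalChannel (p l) ρ * (fourierMasker d)ᴴ) =
        (ρ.trace / d) • (1 : Matrix (Fin d) (Fin d) ℂ) ∧
      ptB (fourierMasker d * classicalChannel (p l) ρ * (fourierMasker d)ᴴ) =
        (ρ.trace / d) • (1 : Matrix (Fin d) (Fin d) ℂ) := by
  intro l ρ _ _
  have htr : ∑ y, ∑ x, ((p l x y : ℝ) : ℂ) * ρ x x = ρ.trace := by
    rw [← trace_diagonal, ← classicalChannel_eq_diagonal,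
      trace_classicalChannel fun x => (hprob l x).2]
  have hV := fun a b => fourierMasker_apply_of_ne (d := d) (a := a) (b := b)
  rw [classicalChannel_eq_diagonal,
    ptA_mul_diagonal_mul_conjTranspose hV (fourierMasker_mul_star_self d),
    ptB_mul_diagonal_mul_conjTranspose hV (fourierMasker_mul_star_self d), htr, one_div_mul_eq_div]
  exact ⟨rfl, rfl⟩

theorem stmt18 {𝒳 Λ : Type*} [Fintype 𝒳] [DecidableEq 𝒳] (d : ℕ) (hd : 0 < d)
    (p : Λ → 𝒳 → Fin d → ℝ)
    (hprob : ∀ l x, (∀ y, 0 ≤ p l x y) ∧ ∑ y, p l x y = 1) :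
    ∀ (l : Λ) (ρ : Matrix 𝒳 𝒳 ℂ), ρ.PosSemidef → ρ.trace = 1 →
      ptA (fourierMasker d * classicalChannel (p l) ρ * (fourierMasker d)ᴴ) =
        (ρ.trace / d) • (1 : Matrix (Fin d) (Fin d) ℂ) ∧
      ptB (fourierMasker d * classicalChannel (p l) ρ * (fourierMasker d)ᴴ) =
        (ρ.trace / d) • (1 : Matrix (Fin d) (Fin d) ℂ) :=
  stmt18_general d p hprob
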